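/- arXiv:0906.5050 — 2 statements merged into one kernel-verified Lean document; each statement's English description precedes it below -/
import Mathlib

section
/- Suppose N items with nonnegative sizes b₁ ≥ b₂ ≥ ... ≥ b_N are distributed to X bins in round-robin fashion. For every bin j, after removing the largest item assigned to bin j (i.e., item b_j, the first item it received), the total size of the remaining items in bin j is at most (1/X)·∑_{i=1}^{N} b_i. -/
/-!
Give each item `b i` of the bin the window of the `X` indices `i - X + 1, …, i`. Since the sizes
are non-increasing, `X * b i` is at most the total size in its window; the windows of indices in
one residue class mod `X` are disjoint, and the windows of `b_{j+X}, b_{j+2X}, …` lie in `[1, N]`.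
-/

open scoped Classical

theorem mul_le_sum_Ioc_of_antitoneOn {b : ℕ → ℝ} {N X i : ℕ} (hb : AntitoneOn b (Set.Icc 1 N))
    (hXi : X ≤ i) (hiN : i ≤ N) : X * b i ≤ ∑ k ∈ Finset.Ioc (i - X) i, b k := by
  have hcard : (Finset.Ioc (i - X) i).card = X := by rw [Nat.card_Ioc]; omega
  have := Finset.card_nsmul_le_sum (Finset.Ioc (i - X) i) b (b i) fun k hk => by
    rw [Finset.mem_Ioc] at hk
    exact hb ⟨by omega, by omega⟩ ⟨by omega, hiN⟩ hk.2
  rwa [hcard, nsmul_eq_mul] at this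

theorem disjoint_Ioc_sub_of_modEq {X i i' : ℕ} (h : i ≡ i' [MOD X]) (hne : i ≠ i') :
    Disjoint (Finset.Ioc (i - X) i) (Finset.Ioc (i' - X) i') := by
  wlog hlt : i < i' generalizing i i'
  · exact (this h.symm hne.symm (by omega)).symm
  have hgap : X ≤ i' - i := Nat.le_of_dvd (by omega) ((Nat.modEq_iff_dvd' hlt.le).1 h)
  rw [Finset.disjoint_left]
  intro k hk hk'
  rw [Finset.mem_Ioc] at hk hk'
  omega

theorem mul_sum_le_sum_Icc_of_modEq {b : ℕ → ℝ} {N X j : ℕ} {S : Finset ℕ}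
    (hnn : ∀ i ∈ Finset.Icc 1 N, 0 ≤ b i) (hb : AntitoneOn b (Set.Icc 1 N))
    (hS : ∀ i ∈ S, X ≤ i ∧ i ≤ N ∧ i ≡ j [MOD X]) :
    X * ∑ i ∈ S, b i ≤ ∑ i ∈ Finset.Icc 1 N, b i := by
  have hsub : S.biUnion (fun i => Finset.Ioc (i - X) i) ⊆ Finset.Icc 1 N := by
    intro k hk
    obtain ⟨i, hi, hk⟩ := Finset.mem_biUnion.1 hk
    rw [Finset.mem_Ioc] at hk
    rw [Finset.mem_Icc]
    have := (hS i hi).2.1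
    omega
  calc (X : ℝ) * ∑ i ∈ S, b i = ∑ i ∈ S, X * b i := Finset.mul_sum ..
    _ ≤ ∑ i ∈ S, ∑ k ∈ Finset.Ioc (i - X) i, b k :=
        Finset.sum_le_sum fun i hi => mul_le_sum_Ioc_of_antitoneOn hb (hS i hi).1 (hS i hi).2.1
    _ = ∑ k ∈ S.biUnion (fun i => Finset.Ioc (i - X) i), b k :=
        (Finset.sum_biUnion fun i hi i' hi' hne =>
          disjoint_Ioc_sub_of_modEq ((hS i hi).2.2.trans (hS i' hi').2.2.symm) hne).symm
    _ ≤ ∑ k ∈ Finset.Icc 1 N, b k :=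
        Finset.sum_le_sum_of_subset_of_nonneg hsub fun k hk _ => hnn k hk

theorem stmt3_general (N X j : ℕ) (hX : 0 < X) (b : ℕ → ℝ)
    (hnn : ∀ i, 0 ≤ b i) (hmono : ∀ i i', 1 ≤ i → i ≤ i' → i' ≤ N → b i' ≤ b i) :
    ∑ i ∈ (Finset.Icc 1 N).filter (fun i => ∃ p : ℕ, 1 ≤ p ∧ i = j + p * X), b i
      ≤ (1/(X:ℝ)) * ∑ i ∈ Finset.Icc 1 N, b i := by
  have hS : ∀ i ∈ (Finset.Icc 1 N).filter (fun i => ∃ p : ℕ, 1 ≤ p ∧ i = j + p * X),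
      X ≤ i ∧ i ≤ N ∧ i ≡ j [MOD X] := by
    intro i hi
    obtain ⟨hi, p, hp, rfl⟩ := Finset.mem_filter.1 hi
    exact ⟨by nlinarith, (Finset.mem_Icc.1 hi).2, Nat.add_mul_modulus_modEq_iff.2 rfl⟩
  rw [one_div, inv_mul_eq_div, le_div_iff₀ (by exact_mod_cast hX), mul_comm]
  exact mul_sum_le_sum_Icc_of_modEq (fun i _ => hnn i)
    (fun i hi i' hi' h => hmono i i' hi.1 h hi'.2) hS

theorem stmt3 (N X j : ℕ) (hX : 0 < X) (hj : 1 ≤ j) (hjX : j ≤ X) (b : ℕ → ℝ)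
    (hnn : ∀ i, 0 ≤ b i) (hmono : ∀ i i', 1 ≤ i → i ≤ i' → i' ≤ N → b i' ≤ b i) :
    ∑ i ∈ (Finset.Icc 1 N).filter (fun i => ∃ p : ℕ, 1 ≤ p ∧ i = j + p * X), b i
      ≤ (1/(X:ℝ)) * ∑ i ∈ Finset.Icc 1 N, b i :=
  stmt3_general N X j hX b hnn hmono
end

section
/- Let W' ⊆ W be window values, and suppose a nonnegative solution (x, Y) satisfies, for each window w', the constraint w'·∑_{C̃∈C(w')} x_{C̃} ≥ ∑_i s_i·Y_{i,w'}. If for every generalized configuration (C, w') with w' ∉ W' and x_{(C,w')} > 0, the main window w of C satisfies w ≥ w', and we transfer: increase x_{(C,w)} by x_{(C,w')}, set x_{(C,w')} = 0, and move (x_{(C,w')}/X_{w'})·Y_{i,w'} from Y_{i,w'} to Y_{i,w} for each item i (where X_{w'} = ∑_{C̃∈C(w')} x_{C̃}), then the resulting solution still satisfies all size constraints w·∑_{C̃∈C(w)} x_{C̃} ≥ ∑_i s_i·Y_{i,w} for every window w ∈ W', the sum ∑ x is unchanged, and for every item i the sum ∑_w Y_{i,w} is unchanged. -/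
/-!
Moving `x_{(C,w')}` to the main window `w ≥ w'` of `C`, together with the share
`x_{(C,w')} / X_{w'}` of every `Y_{i,w'}`, adds to the size constraint at `w` the constraint at
`w'` scaled by that share, with `w'` enlarged to `w` on the larger side; so the constraint at `w`
survives. Over all target windows the shares of `w'` sum to one, so the totals of `x` and of each
`Y_i` are preserved.
-/

open Finset

theorem Finset.sum_eq_sum_of_transfer {α M : Type*} [DecidableEq α] [AddCommMonoid M]
    {s t : Finset α} (hts : t ⊆ s) {f f' g : α → M} (hf'0 : ∀ a ∈ s \ t, f' a = 0)
    (hf' : ∀ a ∈ t, f' a = f a + g a) (hg : ∑ a ∈ t, g a = ∑ a ∈ s \ t, f a) :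
    ∑ a ∈ s, f' a = ∑ a ∈ s, f a := by
  rw [← sum_sdiff hts, ← sum_sdiff hts (f := f), sum_eq_zero hf'0, sum_congr rfl hf',
    sum_add_distrib, ← hg, zero_add, add_comm]

/-- `N ≤ D` forces `N = 0` when `D = 0`, so the junk value `N / 0 = 0` does no harm. -/
theorem div_mul_le_mul_of_le_mul {N D S v w : ℝ} (hN : 0 ≤ N) (hND : N ≤ D) (hS : S ≤ v * D)
    (hvw : N ≠ 0 → v ≤ w) : N / D * S ≤ w * N := by
  rcases hN.eq_or_lt with rfl | hN
  · simp
  have hD : 0 < D := hN.trans_le hND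
  calc N / D * S ≤ N / D * (v * D) := by gcongr
    _ = v * N := by field_simp
    _ ≤ w * N := by gcongr; exact hvw hN.ne'

section Transfer

variable {Conf : Type} [Fintype Conf] (wmain : Conf → ℝ) (x : Conf → ℝ → ℝ)

noncomputable def movedMass (w w' : ℝ) : ℝ := ∑ C, if wmain C = w then x C w' else 0

variable {wmain x}

theorem movedMass_nonneg (hxnn : ∀ C w, 0 ≤ x C w) (w w' : ℝ) : 0 ≤ movedMass wmain x w w' :=
  sum_nonneg fun C _ => by split_ifs <;> simp [hxnn]

theorem movedMass_le_sum (hxnn : ∀ C w, 0 ≤ x C w) (w w' : ℝ) :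
    movedMass wmain x w w' ≤ ∑ C, x C w' :=
  sum_le_sum fun C _ => by split_ifs <;> simp [hxnn]

theorem sum_movedMass {W' : Finset ℝ} (hwmain : ∀ C, wmain C ∈ W') (w' : ℝ) :
    ∑ w ∈ W', movedMass wmain x w w' = ∑ C, x C w' := by
  simp only [movedMass]
  rw [sum_comm]
  simp [hwmain]

theorem sum_ite_sum_eq_sum_movedMass (w : ℝ) (V : Finset ℝ) :
    ∑ C, (if wmain C = w then ∑ w' ∈ V, x C w' else 0) = ∑ w' ∈ V, movedMass wmain x w w' := by
  simp only [movedMass]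
  rw [sum_comm]
  exact sum_congr rfl fun C _ => by split_ifs <;> simp

theorem le_of_movedMass_ne_zero {W W' : Finset ℝ}
    (hmain : ∀ C : Conf, ∀ w' ∈ W, w' ∉ W' → x C w' ≠ 0 → w' ≤ wmain C)
    {w w' : ℝ} (hw' : w' ∈ W \ W') (h : movedMass wmain x w w' ≠ 0) : w' ≤ w := by
  obtain ⟨C, -, hC⟩ := exists_ne_zero_of_sum_ne_zero h
  by_cases hCw : wmain C = w
  · rw [if_pos hCw] at hC
    exact hCw ▸ hmain C w' (mem_sdiff.1 hw').1 (mem_sdiff.1 hw').2 hC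
  · exact absurd (if_neg hCw) hC

variable {ι : Type} [Fintype ι] {W W' : Finset ℝ} {x' : Conf → ℝ → ℝ} {Y Y' : ι → ℝ → ℝ}

theorem sum_mul_le_of_transfer (s : ι → ℝ) (hxnn : ∀ C w, 0 ≤ x C w)
    (hcons : ∀ w ∈ W, ∑ i, s i * Y i w ≤ w * ∑ C, x C w)
    (hmain : ∀ C : Conf, ∀ w' ∈ W, w' ∉ W' → x C w' ≠ 0 → w' ≤ wmain C) {w : ℝ} (hw : w ∈ W)
    (hx' : ∀ C, x' C w = x C w + if wmain C = w then ∑ w' ∈ W \ W', x C w' else 0)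
    (hY' : ∀ i, Y' i w =
      Y i w + ∑ w' ∈ W \ W', movedMass wmain x w w' / (∑ C, x C w') * Y i w') :
    ∑ i, s i * Y' i w ≤ w * ∑ C, x' C w := by
  have hY's : ∑ i, s i * Y' i w = ∑ i, s i * Y i w +
      ∑ w' ∈ W \ W', movedMass wmain x w w' / (∑ C, x C w') * ∑ i, s i * Y i w' := by
    simp only [hY', mul_add, sum_add_distrib, mul_sum]
    rw [sum_comm (s := W \ W')]
    congr! 3
    ring
  have hx's : w * ∑ C, x' C w = w * ∑ C, x C w + ∑ w' ∈ W \ W', w * movedMass wmain x w w' := by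
    simp only [hx', sum_add_distrib, sum_ite_sum_eq_sum_movedMass, mul_add, mul_sum]
  rw [hY's, hx's]
  refine add_le_add (hcons w hw) (sum_le_sum fun w' hw' => ?_)
  exact div_mul_le_mul_of_le_mul (movedMass_nonneg hxnn w w') (movedMass_le_sum hxnn w w')
    (hcons w' (mem_sdiff.1 hw').1) (le_of_movedMass_ne_zero hmain hw')

theorem sum_sum_eq_of_transfer (hW' : W' ⊆ W) (hwmain : ∀ C, wmain C ∈ W')
    (hx' : ∀ C, ∀ w ∈ W', x' C w = x C w + if wmain C = w then ∑ w' ∈ W \ W', x C w' else 0)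
    (hx'0 : ∀ C, ∀ w ∈ W \ W', x' C w = 0) :
    ∑ w ∈ W, ∑ C, x' C w = ∑ w ∈ W, ∑ C, x C w := by
  refine sum_eq_sum_of_transfer hW' (g := fun w => ∑ w' ∈ W \ W', movedMass wmain x w w')
    (fun w hw => sum_eq_zero fun C _ => hx'0 C w hw)
    (fun w hw => by simp only [hx' _ w hw, sum_add_distrib, sum_ite_sum_eq_sum_movedMass]) ?_
  rw [sum_comm]
  exact sum_congr rfl fun w' _ => sum_movedMass hwmain w'

theorem sum_eq_of_transfer {Y Y' : ℝ → ℝ} (hW' : W' ⊆ W) (hwmain : ∀ C, wmain C ∈ W')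
    (hpos : ∀ w' ∈ W, w' ∉ W' → (∑ C, x C w') ≠ 0 ∨ Y w' = 0)
    (hY' : ∀ w ∈ W', Y' w =
      Y w + ∑ w' ∈ W \ W', movedMass wmain x w w' / (∑ C, x C w') * Y w')
    (hY'0 : ∀ w ∈ W \ W', Y' w = 0) :
    ∑ w ∈ W, Y' w = ∑ w ∈ W, Y w := by
  refine sum_eq_sum_of_transfer hW' hY'0 hY' ?_
  rw [sum_comm]
  refine sum_congr rfl fun w' hw' => ?_
  rw [← sum_mul, ← sum_div, sum_movedMass hwmain]
  rcases hpos w' (mem_sdiff.1 hw').1 (mem_sdiff.1 hw').2 with hX | hY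
  · rw [div_self hX, one_mul]
  · simp [hY]

end Transfer

theorem stmt16_general (ι Conf : Type) [Fintype ι] [Fintype Conf]
    (s : ι → ℝ)
    (W W' : Finset ℝ) (hW' : W' ⊆ W)
    (wmain : Conf → ℝ) (hwmain : ∀ C, wmain C ∈ W')
    (x : Conf → ℝ → ℝ) (Y : ι → ℝ → ℝ)
    (hxnn : ∀ C w, 0 ≤ x C w)
    (hcons : ∀ w ∈ W, ∑ i, s i * Y i w ≤ w * ∑ C, x C w)
    (hmain : ∀ C : Conf, ∀ w' ∈ W, w' ∉ W' → x C w' ≠ 0 → w' ≤ wmain C)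
    (hpos : ∀ w' ∈ W, w' ∉ W' → (∑ C, x C w') ≠ 0 ∨ ∀ i, Y i w' = 0)
    (x' : Conf → ℝ → ℝ) (Y' : ι → ℝ → ℝ)
    (hx' : ∀ C, ∀ w ∈ W', x' C w =
        x C w + (if wmain C = w then ∑ w'' ∈ W \ W', x C w'' else 0))
    (hx'0 : ∀ C, ∀ w ∈ W \ W', x' C w = 0)
    (hY' : ∀ i, ∀ w ∈ W', Y' i w = Y i w + ∑ w'' ∈ W \ W',
        ((∑ C, if wmain C = w then x C w'' else 0) / (∑ C, x C w'')) * Y i w'')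
    (hY'0 : ∀ i, ∀ w ∈ W \ W', Y' i w = 0) :
    (∀ w ∈ W', ∑ i, s i * Y' i w ≤ w * ∑ C, x' C w) ∧
    (∑ w ∈ W, ∑ C, x' C w = ∑ w ∈ W, ∑ C, x C w) ∧
    (∀ i, ∑ w ∈ W, Y' i w = ∑ w ∈ W, Y i w) := by
  refine ⟨fun w hw => ?_, sum_sum_eq_of_transfer hW' hwmain hx' hx'0, fun i => ?_⟩
  · exact sum_mul_le_of_transfer s hxnn hcons hmain (hW' hw) (hx' · w hw) (hY' · w hw)
  · exact sum_eq_of_transfer hW' hwmain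
      (fun w' hw' hw'' => (hpos w' hw' hw'').imp_right (· i)) (hY' i) (hY'0 i)

theorem stmt16 (ι Conf : Type) [Fintype ι] [Fintype Conf]
    (s : ι → ℝ) (hs : ∀ i, 0 ≤ s i)
    (W W' : Finset ℝ) (hW' : W' ⊆ W) (hWpos : ∀ w ∈ W, 0 < w)
    (wmain : Conf → ℝ) (hwmain : ∀ C, wmain C ∈ W')
    (x : Conf → ℝ → ℝ) (Y : ι → ℝ → ℝ)
    (hxnn : ∀ C w, 0 ≤ x C w) (hYnn : ∀ i w, 0 ≤ Y i w)
    (hcons : ∀ w ∈ W, ∑ i, s i * Y i w ≤ w * ∑ C, x C w)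
    (hmain : ∀ C : Conf, ∀ w' ∈ W, w' ∉ W' → x C w' ≠ 0 → w' ≤ wmain C)
    (hpos : ∀ w' ∈ W, w' ∉ W' → (∑ C, x C w') ≠ 0 ∨ ∀ i, Y i w' = 0)
    (x' : Conf → ℝ → ℝ) (Y' : ι → ℝ → ℝ)
    (hx' : ∀ C, ∀ w ∈ W', x' C w =
        x C w + (if wmain C = w then ∑ w'' ∈ W \ W', x C w'' else 0))
    (hx'0 : ∀ C, ∀ w ∈ W \ W', x' C w = 0)
    (hY' : ∀ i, ∀ w ∈ W', Y' i w = Y i w + ∑ w'' ∈ W \ W',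
        ((∑ C, if wmain C = w then x C w'' else 0) / (∑ C, x C w'')) * Y i w'')
    (hY'0 : ∀ i, ∀ w ∈ W \ W', Y' i w = 0) :
    (∀ w ∈ W', ∑ i, s i * Y' i w ≤ w * ∑ C, x' C w) ∧
    (∑ w ∈ W, ∑ C, x' C w = ∑ w ∈ W, ∑ C, x C w) ∧
    (∀ i, ∑ w ∈ W, Y' i w = ∑ w ∈ W, Y i w) :=
  stmt16_general ι Conf s W W' hW' wmain hwmain x Y hxnn hcons hmain hpos x' Y' hx' hx'0 hY' hY'0
end
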